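/- In an intra-regular LA-semigroup S with left identity, a nonempty subset Q is a quasi-ideal (SQ ∩ QS ⊆ Q) if and only if SQ ∩ QS = Q; moreover for any quasi-ideal Q one has SQ = QS. -/

import Mathlib

open Pointwise

/-!
Left invertivity and a left identity `e` give the medial law and left commutativity
`a (b c) = b (a c)`. Expanding `a²` in `a = (x a²) y` once by left invertivity and moving factors
produces a right unit, `a = a s`; hence `Q ⊆ Q S`, while `Q ⊆ S Q` comes from `e`. Writing
`q = q₁ s₁`, left commutativity turns `s q` into `q₁ (s s₁)` and left invertivity turns `q s`
into `(s s₁) q₁`, so `S Q = Q S`.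
-/

namespace LASemigroup

variable {S : Type*} [Mul S]

theorem mul_mul_mul_comm (linv : ∀ a b c : S, (a * b) * c = (c * b) * a) (a b c d : S) :
    (a * b) * (c * d) = (a * c) * (b * d) :=
  calc (a * b) * (c * d) = ((c * d) * b) * a := linv _ _ _
    _ = ((b * d) * c) * a := by rw [linv c d b]
    _ = (a * c) * (b * d) := linv _ _ _

theorem mul_left_comm (linv : ∀ a b c : S, (a * b) * c = (c * b) * a)
    {e : S} (he : ∀ a : S, e * a = a) (a b c : S) :
    a * (b * c) = b * (a * c) :=
  calc a * (b * c) = (e * a) * (b * c) := by rw [he]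
    _ = (e * b) * (a * c) := mul_mul_mul_comm linv e a b c
    _ = b * (a * c) := by rw [he]

theorem exists_mul_eq_self (linv : ∀ a b c : S, (a * b) * c = (c * b) * a)
    {e : S} (he : ∀ a : S, e * a = a) {a x y : S} (hxy : a = (x * (a * a)) * y) :
    ∃ s, a * s = a := by
  have hsq : a * a = (a * y) * (x * (a * a)) := by
    nth_rewrite 1 [hxy]
    exact linv _ _ _
  refine ⟨(y * (x * (x * (a * a)))) * y, Eq.symm ?_⟩
  calc a = (x * (a * a)) * y := hxy
    _ = (x * ((a * y) * (x * (a * a)))) * y := by conv_lhs => rw [hsq]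
    _ = ((a * y) * (x * (x * (a * a)))) * y := by rw [mul_left_comm linv he x]
    _ = (y * (x * (x * (a * a)))) * (a * y) := linv _ _ _
    _ = a * ((y * (x * (x * (a * a)))) * y) := mul_left_comm linv he _ _ _

theorem subset_univ_mul {e : S} (he : ∀ a : S, e * a = a) (Q : Set S) :
    Q ⊆ Set.univ * Q :=
  fun a ha => he a ▸ Set.mul_mem_mul (Set.mem_univ e) ha

theorem subset_mul_univ (linv : ∀ a b c : S, (a * b) * c = (c * b) * a)
    {e : S} (he : ∀ a : S, e * a = a) (hintra : ∀ a : S, ∃ x y : S, a = (x * (a * a)) * y)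
    (Q : Set S) : Q ⊆ Q * Set.univ := by
  intro a ha
  obtain ⟨x, y, hxy⟩ := hintra a
  obtain ⟨s, hs⟩ := exists_mul_eq_self linv he hxy
  exact hs ▸ Set.mul_mem_mul ha (Set.mem_univ s)

theorem univ_mul_eq_mul_univ (linv : ∀ a b c : S, (a * b) * c = (c * b) * a)
    {e : S} (he : ∀ a : S, e * a = a) {Q : Set S} (hQ : Q ⊆ Q * Set.univ) :
    Set.univ * Q = Q * Set.univ := by
  apply Set.Subset.antisymm
  · rintro _ ⟨s, -, q, hq, rfl⟩
    obtain ⟨q₁, hq₁, s₁, -, rfl⟩ := hQ hq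
    exact Set.mem_mul.mpr ⟨q₁, hq₁, s * s₁, trivial, (mul_left_comm linv he s q₁ s₁).symm⟩
  · rintro _ ⟨q, hq, s, -, rfl⟩
    obtain ⟨q₁, hq₁, s₁, -, rfl⟩ := hQ hq
    exact Set.mem_mul.mpr ⟨s * s₁, trivial, q₁, hq₁, (linv q₁ s₁ s).symm⟩

end LASemigroup

open LASemigroup in
theorem quasi_ideal_characterization_general {S : Type*} [Mul S]
    (linv : ∀ a b c : S, (a * b) * c = (c * b) * a)
    (e : S) (he : ∀ a : S, e * a = a)
    (hintra : ∀ a : S, ∃ x y : S, a = (x * (a * a)) * y)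
    (Q : Set S) :
    (((Set.univ : Set S) * Q ∩ Q * (Set.univ : Set S) ⊆ Q) ↔
      (Set.univ : Set S) * Q ∩ Q * (Set.univ : Set S) = Q) ∧
    ((Set.univ : Set S) * Q ∩ Q * (Set.univ : Set S) ⊆ Q →
      (Set.univ : Set S) * Q = Q * (Set.univ : Set S)) := by
  have hQS := subset_mul_univ linv he hintra Q
  rw [Set.inter_eq_right.mpr (subset_univ_mul he Q)]
  exact ⟨⟨fun h => h.antisymm hQS, fun h => h.subset⟩,
    fun _ => univ_mul_eq_mul_univ linv he hQS⟩

/-- In an intra-regular LA-semigroup with left identity, a nonempty subset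
Q is a quasi-ideal iff SQ ∩ QS = Q, and every quasi-ideal satisfies SQ = QS. -/
theorem quasi_ideal_characterization {S : Type*} [Mul S]
    (linv : ∀ a b c : S, (a * b) * c = (c * b) * a)
    (e : S) (he : ∀ a : S, e * a = a)
    (hintra : ∀ a : S, ∃ x y : S, a = (x * (a * a)) * y)
    (Q : Set S) (hQne : Q.Nonempty) :
    (((Set.univ : Set S) * Q ∩ Q * (Set.univ : Set S) ⊆ Q) ↔
      (Set.univ : Set S) * Q ∩ Q * (Set.univ : Set S) = Q) ∧
    ((Set.univ : Set S) * Q ∩ Q * (Set.univ : Set S) ⊆ Q →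
      (Set.univ : Set S) * Q = Q * (Set.univ : Set S)) :=
  quasi_ideal_characterization_general linv e he hintra Q
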